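/- arXiv:1404.5086 — 5 statements merged into one kernel-verified Lean document; each statement's English description precedes it below -/
import Mathlib

section
/- Let X = ⊕_{i∈I} X_i be a finite direct sum of subspaces of a vector space X over a field F, and let g : X → ℝ≥0 satisfy g(x) = Σ_{i∈I} g(ρ_i(x)) for all x (where ρ_i is the projection onto X_i along the other summands), g(0) = 0, and g nonnegative. Let A : X → X be linear with A X_i ⊆ X_i, and B : U → X linear with E_j = B⁻¹(X_j). Then for every i ∈ I and every x_i ∈ X_i, the infimum of g(A x_i + B u) over u ranging in the subspace Σ_{j∈I} E_j equals the infimum of g(A x_i + B u) over u ∈ E_i. -/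
/-! Projecting `A x + B u` onto `X_i` does not increase `g`, since `g` is the sum of its
nonnegative values on the components. For `x ∈ X_i` and `u ∈ Σ_j E_j` this projection is
`A x + B v` for some `v ∈ E_i`, because `ρ_i` maps `B E_j` into `B E_i` when `j = i` and kills it
otherwise; so each value over `Σ_j E_j` dominates one over `E_i`. -/

theorem csInf_image_eq_of_forall_exists_le {α β : Type*} [ConditionallyCompleteLattice β]
    {φ : α → β} {s t : Set α} (hst : s ⊆ t) (hs : s.Nonempty) (hbdd : BddBelow (φ '' t))
    (h : ∀ u ∈ t, ∃ v ∈ s, φ v ≤ φ u) :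
    sInf (φ '' t) = sInf (φ '' s) := by
  refine le_antisymm (csInf_le_csInf hbdd (hs.image φ) (Set.image_mono hst)) ?_
  refine le_csInf ((hs.mono hst).image φ) ?_
  rintro _ ⟨u, hu, rfl⟩
  obtain ⟨v, hv, hle⟩ := h u hu
  exact (csInf_le (hbdd.mono (Set.image_mono hst)) ⟨v, hv, rfl⟩).trans hle

theorem Submodule.exists_mem_comap_eq_apply_of_mem_iSup_comap {R U X ι : Type*} [Semiring R]
    [AddCommMonoid U] [Module R U] [AddCommMonoid X] [Module R X] [DecidableEq ι]
    {B : U →ₗ[R] X} {Xs : ι → Submodule R X} {ρ : ι → X →ₗ[R] X}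
    (hρ : ∀ i j, ∀ x ∈ Xs j, ρ i x = if i = j then x else 0) (i : ι) {u : U}
    (hu : u ∈ ⨆ j, (Xs j).comap B) :
    ∃ v ∈ (Xs i).comap B, B v = ρ i (B u) := by
  refine Submodule.iSup_induction _ (motive := fun u => ∃ v ∈ (Xs i).comap B, B v = ρ i (B u))
    hu (fun j u hu => ?_) ⟨0, zero_mem _, by simp⟩ ?_
  · rw [hρ i j _ hu]
    split_ifs with hij
    · exact ⟨u, hij ▸ hu, rfl⟩
    · exact ⟨0, zero_mem _, map_zero B⟩
  · rintro u w ⟨v, hv, hBv⟩ ⟨v', hv', hBv'⟩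
    exact ⟨v + v', add_mem hv hv', by rw [map_add, map_add, map_add, hBv, hBv']⟩

theorem inf_over_sum_eq_inf_over_component_general
    {F U X : Type*} [Field F] [AddCommGroup U] [Module F U]
    [AddCommGroup X] [Module F X] {ι : Type*} [Fintype ι] [DecidableEq ι]
    (A : X →ₗ[F] X) (B : U →ₗ[F] X) (Xs : ι → Submodule F X)
    (hA : ∀ i, ∀ x ∈ Xs i, A x ∈ Xs i)
    (ρ : ι → X →ₗ[F] X)
    (hρproj : ∀ i j, ∀ x ∈ Xs j, ρ i x = if i = j then x else 0)
    (g : X → ℝ) (hgnn : ∀ x, 0 ≤ g x)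
    (hgadd : ∀ x, g x = ∑ i, g (ρ i x))
    (Es : ι → Submodule F U) (hEs : ∀ i, Es i = Submodule.comap B (Xs i)) :
    ∀ i, ∀ x ∈ Xs i,
      sInf ((fun u => g (A x + B u)) '' ((⨆ j, Es j : Submodule F U) : Set U)) =
      sInf ((fun u => g (A x + B u)) '' ((Es i : Submodule F U) : Set U)) := by
  obtain rfl : Es = fun j => (Xs j).comap B := funext hEs
  intro i x hx
  refine csInf_image_eq_of_forall_exists_le (fun u hu => Submodule.mem_iSup_of_mem i hu)
    ⟨0, zero_mem _⟩ ⟨0, by rintro _ ⟨u, -, rfl⟩; exact hgnn _⟩ fun u hu => ?_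
  obtain ⟨v, hv, hBv⟩ := Submodule.exists_mem_comap_eq_apply_of_mem_iSup_comap hρproj i hu
  have hproj : ρ i (A x + B u) = A x + B v := by
    rw [map_add, hρproj i i _ (hA i x hx), if_pos rfl, hBv]
  refine ⟨v, hv, ?_⟩
  calc g (A x + B v) = g (ρ i (A x + B u)) := by rw [hproj]
    _ ≤ ∑ j, g (ρ j (A x + B u)) := Finset.single_le_sum (f := fun j => g (ρ j (A x + B u)))
        (fun j _ => hgnn _) (Finset.mem_univ i)
    _ = g (A x + B u) := (hgadd _).symm

/-- If `g` is additive across the decomposition, then for `x_i ∈ X_i`,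
the infimum of `g(A x_i + B u)` over `u ∈ Σ_j E_j` equals the infimum over `u ∈ E_i`. -/
theorem inf_over_sum_eq_inf_over_component
    {F U X : Type*} [Field F] [AddCommGroup U] [Module F U]
    [AddCommGroup X] [Module F X] {ι : Type*} [Fintype ι] [DecidableEq ι]
    (A : X →ₗ[F] X) (B : U →ₗ[F] X) (Xs : ι → Submodule F X)
    (hXs : DirectSum.IsInternal Xs)
    (hA : ∀ i, ∀ x ∈ Xs i, A x ∈ Xs i)
    (ρ : ι → X →ₗ[F] X)
    (hρmem : ∀ i x, ρ i x ∈ Xs i)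
    (hρsum : ∀ x, ∑ i, ρ i x = x)
    (hρproj : ∀ i j, ∀ x ∈ Xs j, ρ i x = if i = j then x else 0)
    (g : X → ℝ) (hg0 : g 0 = 0) (hgnn : ∀ x, 0 ≤ g x)
    (hgadd : ∀ x, g x = ∑ i, g (ρ i x))
    (Es : ι → Submodule F U) (hEs : ∀ i, Es i = Submodule.comap B (Xs i)) :
    ∀ i, ∀ x ∈ Xs i,
      sInf ((fun u => g (A x + B u)) '' ((⨆ j, Es j : Submodule F U) : Set U)) =
      sInf ((fun u => g (A x + B u)) '' ((Es i : Submodule F U) : Set U)) :=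
  inf_over_sum_eq_inf_over_component_general A B Xs hA ρ hρproj g hgnn hgadd Es hEs
end

section
/- Let X = ⊕_{i∈I} X_i be a finite direct sum with A X_i ⊆ X_i, B : U → X linear, E_i = B⁻¹(X_i), and g : X → ℝ≥0 additive across the decomposition (g(x) = Σ_i g(ρ_i x)) with g(x)=0 ↔ x=0. Suppose U = Σ_{i∈I} E_i. Then for every horizon T, the cost-to-go functions J_t* of the DP recursion (J_T* = g, J_t*(x) = g(x) + min_{u∈U} J_{t+1}*(Ax+Bu)) are themselves additive across the decomposition: J_t*(x) = Σ_{i∈I} J_t*(ρ_i x) for all x ∈ X and all t ≤ T. -/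
/-- Cost-to-go functions of the finite-horizon DP problem, indexed by the number of
steps to go: `Jgo 0 = g` and `Jgo (k+1) x = g x + inf_{u} Jgo k (A x + B u)`
(so that `J_t^* = Jgo (T - t)` for horizon `T`). -/
noncomputable def Jgo {F U X : Type*} [Field F] [AddCommGroup U] [Module F U]
    [AddCommGroup X] [Module F X]
    (g : X → ℝ) (A : X →ₗ[F] X) (B : U →ₗ[F] X) : ℕ → X → ℝ
  | 0 => g
  | (k + 1) => fun x => g x + sInf (Set.range fun u : U => Jgo g A B k (A x + B u))

/-!
Write `V f x = min_u f (A x + B u)`, so that `J_t = g + V J_{t+1}`; it suffices to show that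
`V f` is additive across the decomposition whenever `f ≥ 0` is. Since `A` and `B` respect the
decomposition, a control `u = Σ_j c_j` with `c_j ∈ E_j` splits the cost:
`f (A x + B u) = Σ_i f (A ρ_i x + B c_i)`, which gives `V f x ≥ Σ_i V f (ρ_i x)`. Conversely, if
`w_i = Σ_j c_ij` is optimal for `ρ_i x`, then by `f ≥ 0` its diagonal part `c_ii` alone is at
least as good, and the control `Σ_i c_ii` shows `V f x ≤ Σ_i V f (ρ_i x)`.
-/

open Finset

section

variable {R U X ι : Type*} [Semiring R] [AddCommMonoid U] [Module R U] [AddCommMonoid X]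
  [Module R X] [Fintype ι]

def IsAdditiveAcross (ρ : ι → X →ₗ[R] X) (f : X → ℝ) : Prop :=
  ∀ x, f x = ∑ i, f (ρ i x)

theorem IsAdditiveAcross.add {ρ : ι → X →ₗ[R] X} {f h : X → ℝ} (hf : IsAdditiveAcross ρ f)
    (hh : IsAdditiveAcross ρ h) : IsAdditiveAcross ρ fun x => f x + h x := fun x => by
  show f x + h x = ∑ i, (f (ρ i x) + h (ρ i x))
  rw [hf x, hh x, sum_add_distrib]

theorem Submodule.exists_sum_eq_of_iSup_eq_top {Es : ι → Submodule R U}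
    (hU : ⨆ i, Es i = ⊤) (u : U) :
    ∃ c : ι → U, (∀ i, c i ∈ Es i) ∧ ∑ i, c i = u := by
  have hu : u ∈ ⨆ i ∈ univ, Es i := by simp [hU]
  obtain ⟨μ, hμ⟩ := (Submodule.mem_iSup_finset_iff_exists_sum Es u).1 hu
  exact ⟨fun i => μ i, fun i => (μ i).2, hμ⟩

section Projections

variable [DecidableEq ι] {Xs : ι → Submodule R X} {ρ : ι → X →ₗ[R] X}

theorem proj_sum_of_mem (hρproj : ∀ i j, ∀ x ∈ Xs j, ρ i x = if i = j then x else 0)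
    {y : ι → X} (hy : ∀ j, y j ∈ Xs j) (i : ι) : ρ i (∑ j, y j) = y i := by
  simp [map_sum, hρproj i _ _ (hy _)]

theorem proj_map_comm_of_invariant {A : X →ₗ[R] X} (hA : ∀ i, ∀ x ∈ Xs i, A x ∈ Xs i)
    (hρmem : ∀ i x, ρ i x ∈ Xs i) (hρsum : ∀ x, ∑ i, ρ i x = x)
    (hρproj : ∀ i j, ∀ x ∈ Xs j, ρ i x = if i = j then x else 0) (i : ι) (x : X) :
    ρ i (A x) = A (ρ i x) := by
  conv_lhs => rw [← hρsum x, map_sum]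
  exact proj_sum_of_mem hρproj (fun j => hA j _ (hρmem j x)) i

end Projections

section CostSplitting

variable [DecidableEq ι] {Xs : ι → Submodule R X} {ρ : ι → X →ₗ[R] X}
  {A : X →ₗ[R] X} {B : U →ₗ[R] X} {f : X → ℝ}

theorem IsAdditiveAcross.apply_add_sum (hf : IsAdditiveAcross ρ f)
    (hA : ∀ i, ∀ x ∈ Xs i, A x ∈ Xs i) (hρmem : ∀ i x, ρ i x ∈ Xs i)
    (hρsum : ∀ x, ∑ i, ρ i x = x) (hρproj : ∀ i j, ∀ x ∈ Xs j, ρ i x = if i = j then x else 0)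
    (x : X) {c : ι → U} (hc : ∀ i, B (c i) ∈ Xs i) :
    f (A x + B (∑ j, c j)) = ∑ i, f (A (ρ i x) + B (c i)) := by
  rw [hf]
  refine sum_congr rfl fun i _ => ?_
  rw [map_add, proj_map_comm_of_invariant hA hρmem hρsum hρproj, map_sum,
    proj_sum_of_mem hρproj hc]

theorem IsAdditiveAcross.le_apply_add_sum (hf : IsAdditiveAcross ρ f) (hf₀ : ∀ x, 0 ≤ f x)
    (hA : ∀ i, ∀ x ∈ Xs i, A x ∈ Xs i) (hρmem : ∀ i x, ρ i x ∈ Xs i)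
    (hρsum : ∀ x, ∑ i, ρ i x = x) (hρproj : ∀ i j, ∀ x ∈ Xs j, ρ i x = if i = j then x else 0)
    {i : ι} {x : X} (hx : x ∈ Xs i) {c : ι → U} (hc : ∀ i, B (c i) ∈ Xs i) :
    f (A x + B (c i)) ≤ f (A x + B (∑ j, c j)) := by
  rw [hf.apply_add_sum hA hρmem hρsum hρproj x hc]
  have hρx : ρ i x = x := by simpa using hρproj i i x hx
  simpa only [hρx] using
    single_le_sum (f := fun j => f (A (ρ j x) + B (c j))) (fun j _ => hf₀ _) (mem_univ i)

theorem IsAdditiveAcross.iInf_comp (hf : IsAdditiveAcross ρ f) (hf₀ : ∀ x, 0 ≤ f x)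
    (hA : ∀ i, ∀ x ∈ Xs i, A x ∈ Xs i) (hρmem : ∀ i x, ρ i x ∈ Xs i)
    (hρsum : ∀ x, ∑ i, ρ i x = x) (hρproj : ∀ i j, ∀ x ∈ Xs j, ρ i x = if i = j then x else 0)
    (hU : ⨆ i, (Xs i).comap B = ⊤)
    (hatt : ∀ x, ∃ u, ∀ v, f (A x + B u) ≤ f (A x + B v)) :
    IsAdditiveAcross ρ fun x => ⨅ u, f (A x + B u) := by
  choose m hm using hatt
  have hval : ∀ y, ⨅ u, f (A y + B u) = f (A y + B (m y)) := fun y =>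
    (show IsLeast (Set.range fun u => f (A y + B u)) (f (A y + B (m y))) from
      ⟨⟨m y, rfl⟩, by rintro _ ⟨v, rfl⟩; exact hm y v⟩).isGLB.ciInf_eq
  intro x
  simp only [hval]
  obtain ⟨d, hd, hdsum⟩ := Submodule.exists_sum_eq_of_iSup_eq_top hU (m x)
  choose c hc hcsum using fun i => Submodule.exists_sum_eq_of_iSup_eq_top hU (m (ρ i x))
  apply le_antisymm
  · calc f (A x + B (m x))
        ≤ f (A x + B (∑ i, c i i)) := hm x _
      _ = ∑ i, f (A (ρ i x) + B (c i i)) :=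
        hf.apply_add_sum hA hρmem hρsum hρproj x fun i => hc i i
      _ ≤ ∑ i, f (A (ρ i x) + B (∑ j, c i j)) := sum_le_sum fun i _ =>
        hf.le_apply_add_sum hf₀ hA hρmem hρsum hρproj (hρmem i x) (hc i)
      _ = ∑ i, f (A (ρ i x) + B (m (ρ i x))) := by simp only [hcsum]
  · calc ∑ i, f (A (ρ i x) + B (m (ρ i x)))
        ≤ ∑ i, f (A (ρ i x) + B (d i)) := sum_le_sum fun i _ => hm _ _
      _ = f (A x + B (m x)) := by
        rw [← hf.apply_add_sum hA hρmem hρsum hρproj x hd, hdsum]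

end CostSplitting

end

theorem Jgo_nonneg {F U X : Type*} [Field F] [AddCommGroup U] [Module F U] [AddCommGroup X]
    [Module F X] {g : X → ℝ} (hg : ∀ x, 0 ≤ g x) (A : X →ₗ[F] X) (B : U →ₗ[F] X) :
    ∀ k x, 0 ≤ Jgo g A B k x
  | 0, x => hg x
  | k + 1, x => add_nonneg (hg x) <| Real.sInf_nonneg <| by
      rintro _ ⟨u, rfl⟩
      exact Jgo_nonneg hg A B k _

theorem costToGo_additive_general
    {F U X : Type*} [Field F] [AddCommGroup U] [Module F U]
    [AddCommGroup X] [Module F X] {ι : Type*} [Fintype ι] [DecidableEq ι]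
    (A : X →ₗ[F] X) (B : U →ₗ[F] X) (Xs : ι → Submodule F X)
    (hA : ∀ i, ∀ x ∈ Xs i, A x ∈ Xs i)
    (ρ : ι → X →ₗ[F] X)
    (hρmem : ∀ i x, ρ i x ∈ Xs i)
    (hρsum : ∀ x, ∑ i, ρ i x = x)
    (hρproj : ∀ i j, ∀ x ∈ Xs j, ρ i x = if i = j then x else 0)
    (g : X → ℝ) (hgnn : ∀ x, 0 ≤ g x)
    (hgadd : ∀ x, g x = ∑ i, g (ρ i x))
    (Es : ι → Submodule F U) (hEs : ∀ i, Es i = Submodule.comap B (Xs i))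
    (hU : (⊤ : Submodule F U) = ⨆ i, Es i)
    (hatt : ∀ k (x : X), ∃ u : U, ∀ v : U,
      Jgo g A B k (A x + B u) ≤ Jgo g A B k (A x + B v)) :
    ∀ k (x : X), Jgo g A B k x = ∑ i, Jgo g A B k (ρ i x) := by
  obtain rfl : Es = fun i => (Xs i).comap B := funext hEs
  intro k
  induction k with
  | zero => exact hgadd
  | succ k ih =>
    have hV := IsAdditiveAcross.iInf_comp ih (Jgo_nonneg hgnn A B k) hA hρmem hρsum hρproj
      hU.symm (hatt k)
    exact IsAdditiveAcross.add hgadd hV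

/-- if `g` is additive across the invariant decomposition and
`U = Σ_i E_i`, then every cost-to-go function is additive across the decomposition. -/
theorem costToGo_additive
    {F U X : Type*} [Field F] [AddCommGroup U] [Module F U]
    [AddCommGroup X] [Module F X] {ι : Type*} [Fintype ι] [DecidableEq ι]
    (A : X →ₗ[F] X) (B : U →ₗ[F] X) (Xs : ι → Submodule F X)
    (hXs : DirectSum.IsInternal Xs)
    (hA : ∀ i, ∀ x ∈ Xs i, A x ∈ Xs i)
    (ρ : ι → X →ₗ[F] X)
    (hρmem : ∀ i x, ρ i x ∈ Xs i)
    (hρsum : ∀ x, ∑ i, ρ i x = x)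
    (hρproj : ∀ i j, ∀ x ∈ Xs j, ρ i x = if i = j then x else 0)
    (g : X → ℝ) (hgnn : ∀ x, 0 ≤ g x) (hg0 : ∀ x, g x = 0 ↔ x = 0)
    (hgadd : ∀ x, g x = ∑ i, g (ρ i x))
    (Es : ι → Submodule F U) (hEs : ∀ i, Es i = Submodule.comap B (Xs i))
    (hU : (⊤ : Submodule F U) = ⨆ i, Es i)
    (hatt : ∀ k (x : X), ∃ u : U, ∀ v : U,
      Jgo g A B k (A x + B u) ≤ Jgo g A B k (A x + B v)) :
    ∀ k (x : X), Jgo g A B k x = ∑ i, Jgo g A B k (ρ i x) :=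
  costToGo_additive_general A B Xs hA ρ hρmem hρsum hρproj g hgnn hgadd Es hEs hU hatt
end

section
/- Let X = ⊕_{i∈I} X_i with A X_i ⊆ X_i, B : U → X linear and injective, E_i = B⁻¹(X_i), and V a subspace with U = (⊕_i E_i) ⊕ V. Let g : X → ℝ≥0 be additive across the decomposition with g(x)=0 ↔ x=0. Suppose for every x ∈ X there exists u ∈ Σ_i E_i minimizing g(Ax + Bu) over all u ∈ U. Then A(X) ∩ B(V) = {0}. -/
/-!
If `A x = B v` with `v ∈ V`, then `u = -v` makes `g (A x + B u) = g 0 = 0`, so every minimizer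
`u` satisfies `A x + B u = 0`. Taking `u ∈ ⨆ i, E i`, injectivity of `B` gives `v = -u`, which lies
in both `⨆ i, E i` and its complement `V`, hence vanishes.
-/

section

variable {F U X Y : Type*} [Ring F] [AddCommGroup U] [Module F U] [AddCommGroup X] [Module F X]
  [AddCommGroup Y] [Module F Y]

theorem add_eq_zero_of_forall_le_of_mem_range {g : X → ℝ} (hgnn : ∀ x, 0 ≤ g x)
    (hg0 : ∀ x, g x = 0 ↔ x = 0) {B : U →ₗ[F] X} {y : X} (hy : y ∈ LinearMap.range B) {u : U}
    (hu : ∀ v, g (y + B u) ≤ g (y + B v)) : y + B u = 0 := by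
  obtain ⟨w, rfl⟩ := hy
  have hle : g (B w + B u) ≤ 0 := by
    simpa [(hg0 0).mpr rfl] using hu (-w)
  exact (hg0 _).mp (le_antisymm hle (hgnn _))

theorem inf_map_eq_bot_of_inf_range_le_map {B : U →ₗ[F] X} (hB : Function.Injective B)
    {P : Submodule F X} {W V : Submodule F U} (hP : P ⊓ LinearMap.range B ≤ W.map B)
    (hWV : Disjoint W V) : P ⊓ V.map B = ⊥ := by
  have hPV : P ⊓ V.map B ≤ W.map B ⊓ V.map B :=
    le_inf ((inf_le_inf_left P LinearMap.map_le_range).trans hP) inf_le_right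
  rwa [← Submodule.map_inf B hB, hWV.eq_bot, Submodule.map_bot, le_bot_iff] at hPV

theorem range_inf_range_le_map_of_forall_exists_minimizer {g : X → ℝ} (hgnn : ∀ x, 0 ≤ g x)
    (hg0 : ∀ x, g x = 0 ↔ x = 0) (A : Y →ₗ[F] X) (B : U →ₗ[F] X) (W : Submodule F U)
    (hmin : ∀ x, ∃ u ∈ W, ∀ v : U, g (A x + B u) ≤ g (A x + B v)) :
    LinearMap.range A ⊓ LinearMap.range B ≤ W.map B := by
  rintro _ ⟨⟨x, rfl⟩, hxB⟩
  obtain ⟨u, huW, hu⟩ := hmin x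
  have hsum : A x + B u = 0 := add_eq_zero_of_forall_le_of_mem_range hgnn hg0 hxB hu
  exact ⟨-u, neg_mem huW, by rw [map_neg, eq_neg_of_add_eq_zero_left hsum]⟩

end

theorem rangeA_inter_BV_eq_bot_general
    {F U X : Type*} [Field F] [AddCommGroup U] [Module F U]
    [AddCommGroup X] [Module F X] {ι : Type*}
    (A : X →ₗ[F] X) (B : U →ₗ[F] X) (hB : Function.Injective B)
    (Es : ι → Submodule F U)
    (V : Submodule F U)
    (hdisj : Disjoint (⨆ i, Es i) V)
    (g : X → ℝ) (hgnn : ∀ x, 0 ≤ g x) (hg0 : ∀ x, g x = 0 ↔ x = 0)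
    (hmin : ∀ x : X, ∃ u ∈ (⨆ i, Es i : Submodule F U), ∀ v : U,
      g (A x + B u) ≤ g (A x + B v)) :
    LinearMap.range A ⊓ Submodule.map B V = ⊥ :=
  inf_map_eq_bot_of_inf_range_le_map hB
    (range_inf_range_le_map_of_forall_exists_minimizer hgnn hg0 A B _ hmin) hdisj

/-- if for every `x` some `u ∈ Σ_i E_i` minimizes `g(Ax + Bu)` over all
of `U`, then `A(X) ∩ B(V) = {0}`, where `V` is a complement of `⊕_i E_i` in `U`. -/
theorem rangeA_inter_BV_eq_bot
    {F U X : Type*} [Field F] [AddCommGroup U] [Module F U]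
    [AddCommGroup X] [Module F X] {ι : Type*} [Fintype ι] [DecidableEq ι]
    (A : X →ₗ[F] X) (B : U →ₗ[F] X) (hB : Function.Injective B)
    (Xs : ι → Submodule F X) (hXs : DirectSum.IsInternal Xs)
    (hA : ∀ i, ∀ x ∈ Xs i, A x ∈ Xs i)
    (ρ : ι → X →ₗ[F] X)
    (hρmem : ∀ i x, ρ i x ∈ Xs i)
    (hρsum : ∀ x, ∑ i, ρ i x = x)
    (hρproj : ∀ i j, ∀ x ∈ Xs j, ρ i x = if i = j then x else 0)
    (Es : ι → Submodule F U) (hEs : ∀ i, Es i = Submodule.comap B (Xs i))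
    (hEind : iSupIndep Es)
    (V : Submodule F U) (hUV : (⨆ i, Es i) ⊔ V = ⊤)
    (hdisj : Disjoint (⨆ i, Es i) V)
    (g : X → ℝ) (hgnn : ∀ x, 0 ≤ g x) (hg0 : ∀ x, g x = 0 ↔ x = 0)
    (hgadd : ∀ x, g x = ∑ i, g (ρ i x))
    (hmin : ∀ x : X, ∃ u ∈ (⨆ i, Es i : Submodule F U), ∀ v : U,
      g (A x + B u) ≤ g (A x + B v)) :
    LinearMap.range A ⊓ Submodule.map B V = ⊥ :=
  rangeA_inter_BV_eq_bot_general A B hB Es V hdisj g hgnn hg0 hmin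
end

section
/- For x ∈ X_j (a single summand of the direct sum X = ⊕_i X_i with A X_i ⊆ X_i) and g additive with g(0)=0 and g ≥ 0, and subsystems with controls u_i ∈ E_i = B⁻¹(X_i): any minimizer of (u_i)_{i∈I} ↦ g(Ax + Σ_i B u_i) over ∏_i E_i can be taken with u_i = 0 for all i ≠ j, and the minimal value equals min_{u_j ∈ E_j} g(Ax + B u_j). -/
/-!
Since `A x ∈ X_j` and every `B u_i ∈ X_i`, the projection `ρ_j` of `Ax + Σ_i B u_i` is
`Ax + B u_j`. Additivity and nonnegativity of `g` make `g` dominate its value on any single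
component, so `g(Ax + Σ_i B u_i) ≥ g(Ax + B u_j) ≥ min_{E_j} g(Ax + B ·)`, and this bound is
attained by placing a minimizer of the `j`-th problem in slot `j` and `0` elsewhere.
-/

open Finset

theorem apply_component_le_of_eq_sum {ι X : Type*} [Fintype ι] {g : X → ℝ} {p : ι → X → X}
    (hg : ∀ x, 0 ≤ g x) (hadd : ∀ x, g x = ∑ i, g (p i x)) (j : ι) (x : X) :
    g (p j x) ≤ g x := by
  rw [hadd x]
  exact single_le_sum (fun i _ => hg (p i x)) (mem_univ j)

section Projections

variable {ι R X : Type*} [Fintype ι] [DecidableEq ι] [Semiring R] [AddCommMonoid X]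
  [Module R X] {Xs : ι → Submodule R X} {ρ : ι → X →ₗ[R] X}

theorem proj_add_sum_of_mem (hρ : ∀ i j, ∀ x ∈ Xs j, ρ i x = if i = j then x else 0)
    {j : ι} {y : X} (hy : y ∈ Xs j) {z : ι → X} (hz : ∀ i, z i ∈ Xs i) :
    ρ j (y + ∑ i, z i) = y + z j := by
  simp [map_sum, hρ j j y hy, hρ j _ _ (hz _)]

theorem apply_add_le_apply_add_sum (hρ : ∀ i j, ∀ x ∈ Xs j, ρ i x = if i = j then x else 0)
    {g : X → ℝ} (hg : ∀ x, 0 ≤ g x) (hadd : ∀ x, g x = ∑ i, g (ρ i x))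
    {j : ι} {y : X} (hy : y ∈ Xs j) {z : ι → X} (hz : ∀ i, z i ∈ Xs i) :
    g (y + z j) ≤ g (y + ∑ i, z i) := by
  rw [← proj_add_sum_of_mem hρ hy hz]
  exact apply_component_le_of_eq_sum (p := fun i => ρ i) hg hadd j _

end Projections

theorem min_over_product_eq_min_over_component_general
    {F U X : Type*} [Field F] [AddCommGroup U] [Module F U]
    [AddCommGroup X] [Module F X] {ι : Type*} [Fintype ι] [DecidableEq ι]
    (A : X →ₗ[F] X) (B : U →ₗ[F] X)
    (Xs : ι → Submodule F X)
    (hA : ∀ i, ∀ x ∈ Xs i, A x ∈ Xs i)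
    (ρ : ι → X →ₗ[F] X)
    (hρproj : ∀ i j, ∀ x ∈ Xs j, ρ i x = if i = j then x else 0)
    (g : X → ℝ) (hgnn : ∀ x, 0 ≤ g x)
    (hgadd : ∀ x, g x = ∑ i, g (ρ i x))
    (Es : ι → Submodule F U) (hEs : ∀ i, Es i = Submodule.comap B (Xs i))
    (j : ι) (x : X) (hx : x ∈ Xs j)
    (hattj : ∃ uj ∈ Es j, ∀ w ∈ Es j, g (A x + B uj) ≤ g (A x + B w)) :
    ∃ u : ι → U, (∀ i, u i ∈ Es i) ∧ (∀ i, i ≠ j → u i = 0) ∧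
      (∀ v : ι → U, (∀ i, v i ∈ Es i) →
        g (A x + ∑ i, B (u i)) ≤ g (A x + ∑ i, B (v i))) ∧
      (∀ w ∈ Es j, g (A x + B (u j)) ≤ g (A x + B w)) ∧
      g (A x + ∑ i, B (u i)) = g (A x + B (u j)) := by
  obtain ⟨uj, hujE, hujmin⟩ := hattj
  have hsum : ∑ i, B ((Pi.single j uj : ι → U) i) = B uj := by
    rw [← map_sum, Fintype.sum_pi_single']
  refine ⟨Pi.single j uj, fun i => ?_, fun i hi => by simp [hi], fun v hv => ?_,
    by simpa using hujmin, by rw [hsum, Pi.single_eq_same]⟩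
  · rcases eq_or_ne i j with rfl | hij
    · simpa using hujE
    · simp [hij]
  · have hBv : ∀ i, B (v i) ∈ Xs i := fun i => by simpa [hEs] using hv i
    calc g (A x + ∑ i, B ((Pi.single j uj : ι → U) i)) = g (A x + B uj) := by rw [hsum]
      _ ≤ g (A x + B (v j)) := hujmin (v j) (hv j)
      _ ≤ g (A x + ∑ i, B (v i)) :=
        apply_add_le_apply_add_sum hρproj hgnn hgadd (hA j x hx) hBv

/-- for `x ∈ X_j`, the minimization of `g(Ax + Σ_i B u_i)` over
independent `u_i ∈ E_i` admits a minimizer with `u_i = 0` for all `i ≠ j`, whose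
value equals `min_{u_j ∈ E_j} g(Ax + B u_j)`. -/
theorem min_over_product_eq_min_over_component
    {F U X : Type*} [Field F] [AddCommGroup U] [Module F U]
    [AddCommGroup X] [Module F X] {ι : Type*} [Fintype ι] [DecidableEq ι]
    (A : X →ₗ[F] X) (B : U →ₗ[F] X)
    (Xs : ι → Submodule F X) (hXs : DirectSum.IsInternal Xs)
    (hA : ∀ i, ∀ x ∈ Xs i, A x ∈ Xs i)
    (ρ : ι → X →ₗ[F] X)
    (hρmem : ∀ i x, ρ i x ∈ Xs i)
    (hρsum : ∀ x, ∑ i, ρ i x = x)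
    (hρproj : ∀ i j, ∀ x ∈ Xs j, ρ i x = if i = j then x else 0)
    (g : X → ℝ) (hgnn : ∀ x, 0 ≤ g x) (hg0 : g 0 = 0)
    (hgadd : ∀ x, g x = ∑ i, g (ρ i x))
    (Es : ι → Submodule F U) (hEs : ∀ i, Es i = Submodule.comap B (Xs i))
    (j : ι) (x : X) (hx : x ∈ Xs j)
    (hattj : ∃ uj ∈ Es j, ∀ w ∈ Es j, g (A x + B uj) ≤ g (A x + B w)) :
    ∃ u : ι → U, (∀ i, u i ∈ Es i) ∧ (∀ i, i ≠ j → u i = 0) ∧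
      (∀ v : ι → U, (∀ i, v i ∈ Es i) →
        g (A x + ∑ i, B (u i)) ≤ g (A x + ∑ i, B (v i))) ∧
      (∀ w ∈ Es j, g (A x + B (u j)) ≤ g (A x + B w)) ∧
      g (A x + ∑ i, B (u i)) = g (A x + B (u j)) :=
  min_over_product_eq_min_over_component_general A B Xs hA ρ hρproj g hgnn hgadd Es hEs j x hx hattj
end

section
/- For the concrete system over ℤ/3 with A = [[1,1,0],[0,2,0],[0,0,1]] and B = [[1,0],[1,1],[0,1]] acting on X = (ℤ/3)³ and U = (ℤ/3)², the subspaces X₁ = span{(1,0,0)}, X₂ = span{(1,1,0)}, X₃ = span{(0,0,1)} are A-invariant, X = X₁ ⊕ X₂ ⊕ X₃, and the preimages satisfy E₁ = B⁻¹(X₁) = {0}, E₃ = B⁻¹(X₃) = {0}, while B⁻¹(X₂) = span{(1,0)}; in particular U ≠ E₁ + E₂ + E₃. -/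
/-!
Each of the three spanning vectors is an eigenvector of `A` (with eigenvalues `1, 2, 1`), so its
line is `A`-invariant, and the three vectors form a basis of `(ZMod 3)³`. The matrix `B` is
injective, so the preimage of a line `span {w}` is `span {u}` when `w = B u`, and `0` when `w`
misses the range of `B`: only `(1,1,0) = B (1,0)` lies in the range. Hence `E₁ + E₂ + E₃` is a
line, which cannot fill the plane `U`.
-/

open Module

theorem Submodule.map_mem_span_singleton_of_apply_eq_smul {R M : Type*} [Semiring R]
    [AddCommMonoid M] [Module R M] {f : M →ₗ[R] M} {v : M} {c : R}
    (hv : f v = c • v) {x : M} (hx : x ∈ R ∙ v) : f x ∈ R ∙ v := by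
  obtain ⟨a, rfl⟩ := Submodule.mem_span_singleton.mp hx
  exact Submodule.mem_span_singleton.mpr ⟨a * c, by rw [map_smul, hv, smul_smul]⟩

section DivisionRing

variable {K V W : Type*} [DivisionRing K] [AddCommGroup V] [Module K V] [AddCommGroup W]
  [Module K W]

theorem Submodule.comap_span_singleton_apply_of_injective {f : V →ₗ[K] W}
    (hf : Function.Injective f) (u : V) : (K ∙ f u).comap f = K ∙ u := by
  rw [← Submodule.comap_map_eq_of_injective hf (K ∙ u), Submodule.map_span,
    Set.image_singleton]

theorem Submodule.comap_span_singleton_eq_bot_of_notMem_range {f : V →ₗ[K] W}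
    (hf : Function.Injective f) {w : W} (hw : w ∉ LinearMap.range f) :
    (K ∙ w).comap f = ⊥ := by
  refine (Submodule.eq_bot_iff _).mpr fun u hu => ?_
  obtain ⟨a, ha⟩ := Submodule.mem_span_singleton.mp (Submodule.mem_comap.mp hu)
  by_cases ha0 : a = 0
  · exact hf (by rw [map_zero, ← ha, ha0, zero_smul])
  · exact absurd ⟨a⁻¹ • u, by rw [map_smul, ← ha, smul_smul, inv_mul_cancel₀ ha0, one_smul]⟩ hw

theorem LinearIndependent.isInternal_span_singleton [FiniteDimensional K V]
    {ι : Type*} [Fintype ι] [DecidableEq ι] {v : ι → V} (hv : LinearIndependent K v)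
    (hcard : Fintype.card ι = finrank K V) : DirectSum.IsInternal fun i => K ∙ v i :=
  DirectSum.isInternal_submodule_of_iSupIndep_of_iSup_eq_top hv.iSupIndep_span_singleton
    (by rw [← Submodule.span_range_eq_iSup, hv.span_eq_top_of_card_eq_finrank' hcard])

theorem Submodule.span_singleton_ne_top_of_one_lt_finrank (h : 1 < finrank K V) (v : V) :
    K ∙ v ≠ ⊤ :=
  (span_lt_top_of_card_lt_finrank (s := {v}) (by simpa using h)).ne

end DivisionRing

/-- the concrete system over `ℤ/3` with
`A = [[1,1,0],[0,2,0],[0,0,1]]` and `B = [[1,0],[1,1],[0,1]]`: the stated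
one-dimensional subspaces are `A`-invariant and decompose `X` as a direct sum,
the preimages under `B` are `E₁ = {0}`, `E₃ = {0}`, `E₂ = span{(1,0)}`, and
`E₁ + E₂ + E₃ ≠ U`. -/
theorem concrete_zmod3_example :
    let A : Matrix (Fin 3) (Fin 3) (ZMod 3) := !![1,1,0; 0,2,0; 0,0,1]
    let B : Matrix (Fin 3) (Fin 2) (ZMod 3) := !![1,0; 1,1; 0,1]
    let X1 : Submodule (ZMod 3) (Fin 3 → ZMod 3) :=
      Submodule.span (ZMod 3) {![1, 0, 0]}
    let X2 : Submodule (ZMod 3) (Fin 3 → ZMod 3) :=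
      Submodule.span (ZMod 3) {![1, 1, 0]}
    let X3 : Submodule (ZMod 3) (Fin 3 → ZMod 3) :=
      Submodule.span (ZMod 3) {![0, 0, 1]}
    (∀ x ∈ X1, A.mulVec x ∈ X1) ∧
    (∀ x ∈ X2, A.mulVec x ∈ X2) ∧
    (∀ x ∈ X3, A.mulVec x ∈ X3) ∧
    DirectSum.IsInternal (![X1, X2, X3] : Fin 3 → Submodule (ZMod 3) (Fin 3 → ZMod 3)) ∧
    Submodule.comap B.mulVecLin X1 = ⊥ ∧
    Submodule.comap B.mulVecLin X3 = ⊥ ∧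
    Submodule.comap B.mulVecLin X2 = Submodule.span (ZMod 3) {![1, 0]} ∧
    Submodule.comap B.mulVecLin X1 ⊔ Submodule.comap B.mulVecLin X2 ⊔
      Submodule.comap B.mulVecLin X3 ≠ (⊤ : Submodule (ZMod 3) (Fin 2 → ZMod 3)) := by
  intro A B X1 X2 X3
  have hB : Function.Injective B.mulVecLin := by
    rw [← LinearMap.ker_eq_bot, LinearMap.ker_eq_bot']
    decide
  have h1 : X1.comap B.mulVecLin = ⊥ :=
    Submodule.comap_span_singleton_eq_bot_of_notMem_range hB (by
      simp only [LinearMap.mem_range, not_exists]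
      decide)
  have h3 : X3.comap B.mulVecLin = ⊥ :=
    Submodule.comap_span_singleton_eq_bot_of_notMem_range hB (by
      simp only [LinearMap.mem_range, not_exists]
      decide)
  have hB10 : B.mulVecLin ![1, 0] = ![1, 1, 0] := by decide
  have h2 : X2.comap B.mulVecLin = ZMod 3 ∙ ![1, 0] := by
    simpa only [hB10] using Submodule.comap_span_singleton_apply_of_injective hB ![1, 0]
  have hinv (v : Fin 3 → ZMod 3) (c : ZMod 3) (hv : A.mulVec v = c • v) :
      ∀ x ∈ ZMod 3 ∙ v, A.mulVec x ∈ ZMod 3 ∙ v :=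
    fun _ => Submodule.map_mem_span_singleton_of_apply_eq_smul (f := A.mulVecLin) hv
  refine ⟨hinv _ 1 (by decide), hinv _ 2 (by decide), hinv _ 1 (by decide), ?_, h1, h3, h2, ?_⟩
  · have hlines : ![X1, X2, X3] = fun i => ZMod 3 ∙
        (![![1, 0, 0], ![1, 1, 0], ![0, 0, 1]] : Fin 3 → Fin 3 → ZMod 3) i := by
      ext i : 1
      fin_cases i <;> rfl
    have hbasis : LinearIndependent (ZMod 3)
        (![![1, 0, 0], ![1, 1, 0], ![0, 0, 1]] : Fin 3 → Fin 3 → ZMod 3) := by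
      rw [Fintype.linearIndependent_iff]
      decide
    rw [hlines]
    exact hbasis.isInternal_span_singleton (by simp)
  · rw [h1, h2, h3, sup_bot_eq, bot_sup_eq]
    exact Submodule.span_singleton_ne_top_of_one_lt_finrank (by simp) _
end
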